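/- For every dimension d ≥ 2, there exist two disjoint polytopes P and Q with vertices in {0,1}^d whose Euclidean distance is at most 1/√(d(d−1)). Concretely, the line segment from the origin to (1,…,1) and the simplex with vertices e_1,…,e_{d−1} (the first d−1 standard basis vectors) are disjoint and at distance exactly 1/√(d(d−1)). -/

import Mathlib

/-!
Every point of `conv{e_i : i ∈ s}` has coordinate sum `1` and vanishes at the coordinates outside
`s`, while a point `b • (1, …, 1)` of the diagonal with a vanishing coordinate has `b = 0` and
coordinate sum `0`. For the distance, `p = (1/n, …, 1/n)` is the orthogonal projection onto the
diagonal of the barycentre `q` of the simplex, so `‖p - q‖² = ‖q‖² - ‖p‖² = 1/k - 1/n` with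
`k = #s`, which is `1/(n(n-1))` for `k = n - 1`.
-/

open Finset

theorem convexHull_subset_hyperplane {𝕜 E β : Type*} [Semiring 𝕜] [PartialOrder 𝕜]
    [AddCommMonoid E] [AddCommMonoid β] [PartialOrder β] [IsOrderedAddMonoid β]
    [Module 𝕜 E] [Module 𝕜 β] [PosSMulMono 𝕜 β] {s : Set E} {f : E → β}
    (hf : IsLinearMap 𝕜 f) {r : β} (h : ∀ x ∈ s, f x = r) :
    convexHull 𝕜 s ⊆ {x | f x = r} :=
  convexHull_min h (convex_hyperplane hf r)

namespace EuclideanSpace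

variable {ι : Type*} [DecidableEq ι]

theorem sum_apply_eq_one_of_mem_convexHull_single [Fintype ι] {s : Set ι}
    {x : EuclideanSpace ℝ ι} (hx : x ∈ convexHull ℝ ((fun i => single i (1 : ℝ)) '' s)) :
    ∑ i, x i = 1 := by
  refine convexHull_subset_hyperplane (f := fun x : EuclideanSpace ℝ ι => ∑ i, x i)
    ⟨fun x y => by simp [sum_add_distrib], fun c x => by simp [mul_sum]⟩ ?_ hx
  rintro _ ⟨i, -, rfl⟩
  simp

theorem apply_eq_zero_of_mem_convexHull_single {s : Set ι} {j : ι} (hj : j ∉ s)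
    {x : EuclideanSpace ℝ ι} (hx : x ∈ convexHull ℝ ((fun i => single i (1 : ℝ)) '' s)) :
    x j = 0 := by
  refine convexHull_subset_hyperplane
    (proj j : EuclideanSpace ℝ ι →L[ℝ] ℝ).isLinear ?_ hx
  rintro _ ⟨i, hi, rfl⟩
  simp [(ne_of_mem_of_not_mem hi hj).symm]

theorem segment_zero_inter_convexHull_single_eq_empty [Fintype ι] {s : Set ι} {j : ι}
    (hj : j ∉ s) :
    segment ℝ 0 (WithLp.toLp 2 fun _ => 1) ∩
      convexHull ℝ ((fun i => single i (1 : ℝ)) '' s) = ∅ := by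
  refine Set.eq_empty_of_forall_notMem ?_
  rintro _ ⟨⟨a, b, -, -, -, rfl⟩, hx⟩
  have hsum := sum_apply_eq_one_of_mem_convexHull_single hx
  have hb := apply_eq_zero_of_mem_convexHull_single hj hx
  simp_all

theorem centerMass_single_apply (s : Finset ι) (j : ι) :
    s.centerMass (fun _ => (1 : ℝ)) (fun i => single i (1 : ℝ)) j =
      if j ∈ s then (#s : ℝ)⁻¹ else 0 := by
  simp [centerMass]

theorem dist_smul_ones_centerMass_single [Fintype ι] {s : Finset ι} (hs : s.Nonempty) :
    dist ((Fintype.card ι : ℝ)⁻¹ • WithLp.toLp 2 fun _ => 1)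
      (s.centerMass (fun _ => (1 : ℝ)) (fun i => single i (1 : ℝ))) =
      √((#s : ℝ)⁻¹ - (Fintype.card ι : ℝ)⁻¹) := by
  set q := s.centerMass (fun _ => (1 : ℝ)) (fun i => single i (1 : ℝ))
  set n : ℝ := (Fintype.card ι : ℝ)
  have hn : n ≠ 0 := by
    have := hs.to_type
    simp [n, Fintype.card_ne_zero]
  have hk : (#s : ℝ) ≠ 0 := by simp [hs.ne_empty]
  have hsum : ∑ i, q i = 1 := by simp [q, centerMass_single_apply, hk]
  have hsq : ∑ i, q i ^ 2 = (#s : ℝ)⁻¹ := by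
    simp [q, centerMass_single_apply, sq, mul_inv_cancel_left₀ hk]
  rw [EuclideanSpace.dist_eq]
  congr 1
  calc _ = ∑ i, (n⁻¹ ^ 2 - 2 * n⁻¹ * q i + q i ^ 2) := by
        congr with i
        simp [Real.dist_eq, sq_abs]
        ring
    _ = _ := by
        simp only [sum_add_distrib, sum_sub_distrib, ← mul_sum, hsum, hsq, sum_const, card_univ]
        rw [nsmul_eq_mul, sq, ← mul_assoc, mul_inv_cancel₀ hn]
        ring

end EuclideanSpace

theorem stmt_4 (d : ℕ) (hd : 2 ≤ d) :
    let P : Set (EuclideanSpace ℝ (Fin d)) :=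
      segment ℝ (0 : EuclideanSpace ℝ (Fin d)) (WithLp.toLp 2 (fun _ => 1))
    let Q : Set (EuclideanSpace ℝ (Fin d)) :=
      convexHull ℝ {x | ∃ i : Fin d, (i : ℕ) < d - 1 ∧ x = EuclideanSpace.single i (1 : ℝ)}
    P ∩ Q = ∅ ∧ sInf (Set.image2 dist P Q) ≤ 1 / Real.sqrt (d * (d - 1)) := by
  intro P Q
  set s : Finset (Fin d) := {i | (i : ℕ) < d - 1}
  have hQ : Q = convexHull ℝ ((fun i => EuclideanSpace.single i (1 : ℝ)) '' s) := by
    refine congrArg (convexHull ℝ) (Set.ext fun x => ?_)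
    simp [s, eq_comm]
  have hs : #s = d - 1 := by simp [s, Fin.card_filter_val_lt]
  have hs₀ : s.Nonempty := by rw [← card_pos, hs]; omega
  set p : EuclideanSpace ℝ (Fin d) := (d : ℝ)⁻¹ • WithLp.toLp 2 fun _ => 1
  set q := s.centerMass (fun _ => (1 : ℝ)) (fun i => EuclideanSpace.single i (1 : ℝ))
  have hd₀ : (d : ℝ)⁻¹ ≤ 1 := inv_le_one_of_one_le₀ (by norm_cast; omega)
  have hp : p ∈ P :=
    ⟨1 - (d : ℝ)⁻¹, (d : ℝ)⁻¹, by linarith, by positivity, by ring, by simp [p]⟩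
  have hq : q ∈ Q := hQ ▸ centerMass_mem_convexHull s (fun _ _ => zero_le_one)
    (by simpa using hs₀) fun i hi => Set.mem_image_of_mem _ hi
  refine ⟨hQ ▸ EuclideanSpace.segment_zero_inter_convexHull_single_eq_empty
    (j := ⟨d - 1, by omega⟩) (by simp [s]), ?_⟩
  calc sInf (Set.image2 dist P Q) ≤ dist p q :=
        csInf_le ⟨0, by rintro _ ⟨x, -, y, -, rfl⟩; exact dist_nonneg⟩
          (Set.mem_image2_of_mem hp hq)
    _ = √((#s : ℝ)⁻¹ - (d : ℝ)⁻¹) := by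
        simpa using EuclideanSpace.dist_smul_ones_centerMass_single hs₀
    _ = 1 / √(d * (d - 1)) := by
        have hd₁ : (d : ℝ) - 1 ≠ 0 := by rw [sub_ne_zero]; norm_cast; omega
        rw [hs, Nat.cast_sub (by omega), Nat.cast_one, one_div, ← Real.sqrt_inv]
        congr 1
        field_simp
        ring
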